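/- arXiv:math/0602112 — 3 statements merged into one kernel-verified Lean document; each statement's English description precedes it below -/
import Mathlib

section
/- The twisted Virasoro-affine brackets define a Lie algebra structure on f = (⊕_{n∈ℤ} ℂL(n)) ⊕ (ℂ[t₀,t₀^{-1}]⊗(ġ ⊕ gl_N)) ⊕ ℂC_ġ ⊕ ℂC_{sl_N} ⊕ ℂC_Hei ⊕ ℂC_VH ⊕ ℂC_Vir, where (writing x(n) = t₀ⁿ⊗x and I ∈ gl_N for the identity matrix): [L(n),L(m)] = (n−m)L(n+m) + ((n³−n)/12)δ_{n,−m}C_Vir; for x,y ∈ ġ, [x(n),y(m)] = [x,y](n+m) + n δ_{n,−m}(x|y) C_ġ; for x,y ∈ sl_N, [x(n),y(m)] = [x,y](n+m) + n δ_{n,−m} tr(xy) C_{sl_N}; [I(n),I(m)] = n δ_{n,−m} C_Hei; [x(n),I(m)] = 0 for x ∈ sl_N; [x(n),y(m)] = 0 for x ∈ ġ, y ∈ gl_N; [L(n),x(m)] = −m x(n+m) for x ∈ ġ ⊕ sl_N; [L(n),I(m)] = −m I(n+m) − (n²+n)δ_{n,−m}C_VH; and C_ġ, C_{sl_N}, C_Hei,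 C_VH, C_Vir are central. That is, this bracket satisfies the Jacobi identity, so the semidirect product of the Witt algebra with the loop algebra of ġ ⊕ gl_N admits this 5-dimensional central extension. -/
noncomputable section

/-- The underlying vector space of the twisted Virasoro-affine algebra
`f = (⊕_n ℂL(n)) ⊕ (ℂ[t₀,t₀⁻¹] ⊗ (ġ ⊕ gl_N)) ⊕ ℂC_ġ ⊕ ℂC_{sl_N} ⊕ ℂC_Hei ⊕ ℂC_VH ⊕ ℂC_Vir`.
The first factor records the coefficients of the `L(n)`, the second is the loop space of
`ġ ⊕ gl_N` (the element `t₀ⁿ ⊗ v` is `Finsupp.single n v`), and the last factor records the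
coefficients of the five central elements `C_ġ, C_{sl_N}, C_Hei, C_VH, C_Vir` (in this
order). -/
abbrev TVA (N : ℕ) (g : Type*) [AddCommGroup g] [Module ℂ g] :=
  (ℤ →₀ ℂ) × (ℤ →₀ (g × Matrix (Fin N) (Fin N) ℂ)) × (Fin 5 → ℂ)

section TVAGenerators

variable {N : ℕ} {g : Type*} [AddCommGroup g] [Module ℂ g]

/-- The element `L(n)` of the twisted Virasoro-affine algebra. -/
def Lgen (n : ℤ) : TVA N g := (Finsupp.single n 1, 0, 0)

/-- The element `t₀ⁿ ⊗ v`, `v ∈ ġ ⊕ gl_N`, of the twisted Virasoro-affine algebra. -/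
def Xgen (n : ℤ) (v : g × Matrix (Fin N) (Fin N) ℂ) : TVA N g :=
  (0, Finsupp.single n v, 0)

/-- The central elements: `Cgen 0 = C_ġ`, `Cgen 1 = C_{sl_N}`, `Cgen 2 = C_Hei`,
`Cgen 3 = C_VH`, `Cgen 4 = C_Vir`. -/
def Cgen (i : Fin 5) : TVA N g := (0, 0, Pi.single i 1)

end TVAGenerators

/-- The defining properties of the bracket of the twisted Virasoro-affine algebra `f`
(for `ġ` with invariant form `B = (·|·)`): bilinearity, alternating, the Jacobi identity,
and the structure formulas
`[L(n),L(m)] = (n−m)L(n+m) + ((n³−n)/12)δ_{n,−m}C_Vir`;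
`[x(n),y(m)] = [x,y](n+m) + n δ_{n,−m}(x|y) C_ġ` for `x,y ∈ ġ`;
`[x(n),y(m)] = [x,y](n+m) + n δ_{n,−m} tr(xy) C_{sl_N}` for `x,y ∈ sl_N`;
`[I(n),I(m)] = n δ_{n,−m} C_Hei`;
`[x(n),I(m)] = 0` for `x ∈ sl_N`; `[x(n),y(m)] = 0` for `x ∈ ġ`, `y ∈ gl_N`;
`[L(n),x(m)] = −m x(n+m)` for `x ∈ ġ ⊕ sl_N`;
`[L(n),I(m)] = −m I(n+m) − (n²+n)δ_{n,−m}C_VH`;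
with `C_ġ, C_{sl_N}, C_Hei, C_VH, C_Vir` central. -/
def IsTVABracket {N : ℕ} {g : Type*} [LieRing g] [LieAlgebra ℂ g]
    (B : LinearMap.BilinForm ℂ g)
    (br : TVA N g → TVA N g → TVA N g) : Prop :=
  -- bilinearity
  (∀ y : TVA N g, IsLinearMap ℂ fun x => br x y) ∧
  (∀ x : TVA N g, IsLinearMap ℂ fun y => br x y) ∧
  -- alternating
  (∀ x : TVA N g, br x x = 0) ∧
  -- Jacobi identity
  (∀ x y z : TVA N g, br (br x y) z + br (br y z) x + br (br z x) y = 0) ∧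
  -- `[L(n),L(m)] = (n−m)L(n+m) + ((n³−n)/12) δ_{n,−m} C_Vir`
  (∀ n m : ℤ, br (Lgen n) (Lgen m)
    = ((n : ℂ) - m) • Lgen (n + m)
      + (if n + m = 0 then ((n : ℂ) ^ 3 - n) / 12 else 0) • Cgen 4) ∧
  -- `[x(n),y(m)] = [x,y](n+m) + n δ_{n,−m} (x|y) C_ġ` for `x, y ∈ ġ`
  (∀ (n m : ℤ) (x y : g), br (Xgen n (x, 0)) (Xgen m (y, 0))
    = Xgen (n + m) (⁅x, y⁆, 0)
      + ((if n + m = 0 then (n : ℂ) else 0) * B x y) • Cgen 0) ∧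
  -- `[x(n),y(m)] = [x,y](n+m) + n δ_{n,−m} tr(xy) C_{sl_N}` for `x, y ∈ sl_N`
  (∀ (n m : ℤ) (X Y : Matrix (Fin N) (Fin N) ℂ), X.trace = 0 → Y.trace = 0 →
    br (Xgen n (0, X)) (Xgen m (0, Y))
      = Xgen (n + m) ((0 : g), X * Y - Y * X)
        + ((if n + m = 0 then (n : ℂ) else 0) * (X * Y).trace) • Cgen 1) ∧
  -- `[I(n),I(m)] = n δ_{n,−m} C_Hei`
  (∀ n m : ℤ, br (Xgen n ((0 : g), (1 : Matrix (Fin N) (Fin N) ℂ))) (Xgen m (0, 1))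
    = (if n + m = 0 then (n : ℂ) else 0) • Cgen 2) ∧
  -- `[x(n),I(m)] = 0` for `x ∈ sl_N`
  (∀ (n m : ℤ) (X : Matrix (Fin N) (Fin N) ℂ), X.trace = 0 →
    br (Xgen n ((0 : g), X)) (Xgen m (0, 1)) = 0) ∧
  -- `[x(n),y(m)] = 0` for `x ∈ ġ`, `y ∈ gl_N`
  (∀ (n m : ℤ) (x : g) (Y : Matrix (Fin N) (Fin N) ℂ),
    br (Xgen n (x, 0)) (Xgen m (0, Y)) = 0) ∧
  -- `[L(n),x(m)] = −m x(n+m)` for `x ∈ ġ ⊕ sl_N`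
  (∀ (n m : ℤ) (x : g) (X : Matrix (Fin N) (Fin N) ℂ), X.trace = 0 →
    br (Lgen n) (Xgen m (x, X)) = (-(m : ℂ)) • Xgen (n + m) (x, X)) ∧
  -- `[L(n),I(m)] = −m I(n+m) − (n²+n) δ_{n,−m} C_VH`
  (∀ n m : ℤ, br (Lgen n) (Xgen m ((0 : g), 1))
    = (-(m : ℂ)) • Xgen (n + m) ((0 : g), 1)
      + (if n + m = 0 then -((n : ℂ) ^ 2 + n) else 0) • Cgen 3) ∧
  -- the five central elements are central
  (∀ (i : Fin 5) (z : TVA N g), br z (Cgen i) = 0 ∧ br (Cgen i) z = 0)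

namespace TVAwork
variable {N : ℕ} {g : Type*} [LieRing g] [LieAlgebra ℂ g]
def KK (N : ℕ) (B : LinearMap.BilinForm ℂ g) (v w : g × Matrix (Fin N) (Fin N) ℂ) : Fin 5 → ℂ :=
  ![B v.1 w.1,
    (v.2 * w.2).trace - v.2.trace * w.2.trace / N,
    v.2.trace * w.2.trace / (N : ℂ) ^ 2, 0, 0]
def brk (B : LinearMap.BilinForm ℂ g) (x y : TVA N g) : TVA N g :=
  ( x.1.sum fun n an => y.1.sum fun m am => Finsupp.single (n + m) (an * am * ((n : ℂ) - m)),
    (x.1.sum fun n an => y.2.1.sum fun m w => Finsupp.single (n + m) ((-(an * m)) • w))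
      + (y.1.sum fun m am => x.2.1.sum fun n v => Finsupp.single (n + m) ((am * n) • v))
      + (x.2.1.sum fun n v => y.2.1.sum fun m w =>
          Finsupp.single (n + m) (⁅v.1, w.1⁆, v.2 * w.2 - w.2 * v.2)),
    (x.2.1.sum fun n v => (n : ℂ) • KK N B v (y.2.1 (-n)))
      + (x.1.sum fun n an => (Pi.single (3 : Fin 5) (-(an * ((n : ℂ) ^ 2 + n)) * ((y.2.1 (-n)).2.trace / N)) : Fin 5 → ℂ))
      - (y.1.sum fun n an => (Pi.single (3 : Fin 5) (-(an * ((n : ℂ) ^ 2 + n)) * ((x.2.1 (-n)).2.trace / N)) : Fin 5 → ℂ))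
      + (x.1.sum fun n an => (Pi.single (4 : Fin 5) (an * y.1 (-n) * (((n : ℂ) ^ 3 - n) / 12)) : Fin 5 → ℂ)) )
lemma KK_zero_right (B : LinearMap.BilinForm ℂ g) (v : g × Matrix (Fin N) (Fin N) ℂ) :
    KK N B v 0 = 0 := by funext i; fin_cases i <;> simp [KK]
lemma KK_add_right (B : LinearMap.BilinForm ℂ g) (v w w' : g × Matrix (Fin N) (Fin N) ℂ) :
    KK N B v (w + w') = KK N B v w + KK N B v w' := by
  funext i; fin_cases i <;> simp [KK, Matrix.trace_add, mul_add] <;> ring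
lemma KK_smul_right (B : LinearMap.BilinForm ℂ g) (r : ℂ) (v w : g × Matrix (Fin N) (Fin N) ℂ) :
    KK N B v (r • w) = r • KK N B v w := by
  funext i; fin_cases i <;> simp [KK, Matrix.trace_smul, Matrix.mul_smul] <;> ring
lemma KK_zero_left (B : LinearMap.BilinForm ℂ g) (w : g × Matrix (Fin N) (Fin N) ℂ) :
    KK N B 0 w = 0 := by funext i; fin_cases i <;> simp [KK]
lemma KK_add_left (B : LinearMap.BilinForm ℂ g) (v v' w : g × Matrix (Fin N) (Fin N) ℂ) :
    KK N B (v + v') w = KK N B v w + KK N B v' w := by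
  funext i; fin_cases i <;> simp [KK, Matrix.trace_add, add_mul] <;> ring
lemma KK_smul_left (B : LinearMap.BilinForm ℂ g) (r : ℂ) (v w : g × Matrix (Fin N) (Fin N) ℂ) :
    KK N B (r • v) w = r • KK N B v w := by
  funext i; fin_cases i <;> simp [KK, Matrix.trace_smul, Matrix.smul_mul] <;> ring

lemma brk_add_left (B : LinearMap.BilinForm ℂ g) (x x' y : TVA N g) :
    brk B (x + x') y = brk B x y + brk B x' y := by
  simp only [brk, Prod.fst_add, Prod.snd_add, Prod.mk_add_mk, Prod.mk.injEq, Finsupp.add_apply]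
  refine ⟨?_, ?_, ?_⟩
  · rw [Finsupp.sum_add_index' (by simp) (fun n b1 b2 => ?_)]
    simp only [add_mul, Finsupp.single_add]
    exact Finsupp.sum_add
  · have e1 := Finsupp.sum_add_index' (f := x.1) (g := x'.1)
      (h := fun n an => y.2.1.sum fun m w => Finsupp.single (n + m) ((-(an * m)) • w))
      (by simp) (fun n b1 b2 => by
        simp only [add_mul, neg_add, add_smul, Finsupp.single_add, Finsupp.sum_add])
    have e2 : (y.1.sum fun m am => (x.2.1 + x'.2.1).sum fun n v =>
          Finsupp.single (n + m) ((am * n) • v))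
        = (y.1.sum fun m am => x.2.1.sum fun n v => Finsupp.single (n + m) ((am * n) • v))
          + (y.1.sum fun m am => x'.2.1.sum fun n v => Finsupp.single (n + m) ((am * n) • v)) := by
      rw [← Finsupp.sum_add]
      congr 1; funext m am
      exact Finsupp.sum_add_index' (by simp) (fun n v1 v2 => by
        simp only [smul_add, Finsupp.single_add, Finsupp.sum_add])
    have e3 := Finsupp.sum_add_index' (f := x.2.1) (g := x'.2.1)
      (h := fun n v => y.2.1.sum fun m w =>
        Finsupp.single (n + m) (⁅v.1, w.1⁆, v.2 * w.2 - w.2 * v.2))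
      (by simp [Prod.mk_zero_zero]) (fun n v1 v2 => by
        have key : ∀ (m : ℤ) (w : g × Matrix (Fin N) (Fin N) ℂ),
            (Finsupp.single (n + m) (⁅(v1 + v2).1, w.1⁆,
              (v1 + v2).2 * w.2 - w.2 * (v1 + v2).2) : ℤ →₀ (g × Matrix (Fin N) (Fin N) ℂ))
            = Finsupp.single (n + m) (⁅v1.1, w.1⁆, v1.2 * w.2 - w.2 * v1.2)
              + Finsupp.single (n + m) (⁅v2.1, w.1⁆, v2.2 * w.2 - w.2 * v2.2) := by
          intro m w
          rw [← Finsupp.single_add]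
          refine congrArg _ (Prod.ext ?_ ?_)
          · simp [add_lie]
          · simp only [Prod.snd_add, Prod.fst_add]; noncomm_ring
        simp only [key, Finsupp.sum_add])
    rw [e1, e2, e3]; abel
  · have e1 := Finsupp.sum_add_index' (f := x.2.1) (g := x'.2.1)
      (h := fun n v => (n : ℂ) • KK N B v (y.2.1 (-n)))
      (by simp [KK_zero_left]) (fun n v1 v2 => by simp only [KK_add_left, smul_add])
    have e2 := Finsupp.sum_add_index' (f := x.1) (g := x'.1)
      (h := fun n an => (Pi.single (3 : Fin 5) (-(an * ((n : ℂ) ^ 2 + n)) * ((y.2.1 (-n)).2.trace / N)) : Fin 5 → ℂ))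
      (by simp) (fun n b1 b2 => by simp only [← Pi.single_add]; congr 1; ring)
    have e3 : (y.1.sum fun n an => (Pi.single (3 : Fin 5)
          (-(an * ((n : ℂ) ^ 2 + n)) * (((x.2.1 (-n)).2 + (x'.2.1 (-n)).2).trace / N)) : Fin 5 → ℂ))
        = (y.1.sum fun n an => (Pi.single (3 : Fin 5) (-(an * ((n : ℂ) ^ 2 + n)) * ((x.2.1 (-n)).2.trace / N)) : Fin 5 → ℂ))
          + (y.1.sum fun n an => (Pi.single (3 : Fin 5) (-(an * ((n : ℂ) ^ 2 + n)) * ((x'.2.1 (-n)).2.trace / N)) : Fin 5 → ℂ)) := by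
      rw [← Finsupp.sum_add]
      congr 1; funext n an
      rw [← Pi.single_add]; congr 1
      rw [Matrix.trace_add]; ring
    have e4 := Finsupp.sum_add_index' (f := x.1) (g := x'.1)
      (h := fun n an => (Pi.single (4 : Fin 5) (an * y.1 (-n) * (((n : ℂ) ^ 3 - n) / 12)) : Fin 5 → ℂ))
      (by simp) (fun n b1 b2 => by simp only [← Pi.single_add]; congr 1; ring)
    rw [e1, e2, e3, e4]; abel

lemma brk_smul_left (B : LinearMap.BilinForm ℂ g) (r : ℂ) (x y : TVA N g) :
    brk B (r • x) y = r • brk B x y := by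
  simp only [brk, Prod.smul_fst, Prod.smul_snd, Prod.smul_mk, Prod.mk.injEq, Finsupp.smul_apply]
  refine ⟨?_, ?_, ?_⟩
  · rw [Finsupp.sum_smul_index' (by simp)]
    rw [Finsupp.smul_sum]
    congr 1; funext n an
    rw [Finsupp.smul_sum]
    congr 1; funext m am
    rw [Finsupp.smul_single]; congr 1; simp [smul_eq_mul]; ring
  · have e1 : ((r • x.1).sum fun n an => y.2.1.sum fun m w =>
          Finsupp.single (n + m) ((-(an * m)) • w))
        = r • (x.1.sum fun n an => y.2.1.sum fun m w => Finsupp.single (n + m) ((-(an * m)) • w)) := by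
      rw [Finsupp.sum_smul_index' (by simp), Finsupp.smul_sum]
      congr 1; funext n an
      rw [Finsupp.smul_sum]
      congr 1; funext m w
      rw [Finsupp.smul_single]; congr 1
      rw [smul_smul]; congr 1; simp [smul_eq_mul]; ring
    have e2 : (y.1.sum fun m am => (r • x.2.1).sum fun n v =>
          Finsupp.single (n + m) ((am * n) • v))
        = r • (y.1.sum fun m am => x.2.1.sum fun n v => Finsupp.single (n + m) ((am * n) • v)) := by
      rw [Finsupp.smul_sum]
      congr 1; funext m am
      rw [Finsupp.sum_smul_index' (by simp), Finsupp.smul_sum]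
      congr 1; funext n v
      rw [Finsupp.smul_single, smul_smul, smul_smul, mul_comm]
    have e3 : ((r • x.2.1).sum fun n v => y.2.1.sum fun m w =>
          Finsupp.single (n + m) (⁅v.1, w.1⁆, v.2 * w.2 - w.2 * v.2))
        = r • (x.2.1.sum fun n v => y.2.1.sum fun m w =>
            Finsupp.single (n + m) (⁅v.1, w.1⁆, v.2 * w.2 - w.2 * v.2)) := by
      rw [Finsupp.sum_smul_index' (by simp [Prod.mk_zero_zero]), Finsupp.smul_sum]
      congr 1; funext n v
      rw [Finsupp.smul_sum]
      congr 1; funext m w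
      rw [Finsupp.smul_single]
      congr 1
      refine Prod.ext (by simp [smul_lie]) ?_
      simp only [Prod.smul_snd, Prod.smul_fst, Matrix.smul_mul, Matrix.mul_smul, smul_sub]
    rw [e1, e2, e3, smul_add, smul_add]
  · have e1 : ((r • x.2.1).sum fun n v => (n : ℂ) • KK N B v (y.2.1 (-n)))
        = r • (x.2.1.sum fun n v => (n : ℂ) • KK N B v (y.2.1 (-n))) := by
      rw [Finsupp.sum_smul_index' (by simp [KK_zero_left]), Finsupp.smul_sum]
      congr 1; funext n v
      rw [KK_smul_left, smul_comm]
    have e2 : ((r • x.1).sum fun n an => (Pi.single (3 : Fin 5)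
          (-(an * ((n : ℂ) ^ 2 + n)) * ((y.2.1 (-n)).2.trace / N)) : Fin 5 → ℂ))
        = r • (x.1.sum fun n an => (Pi.single (3 : Fin 5)
            (-(an * ((n : ℂ) ^ 2 + n)) * ((y.2.1 (-n)).2.trace / N)) : Fin 5 → ℂ)) := by
      rw [Finsupp.sum_smul_index' (by simp), Finsupp.smul_sum]
      congr 1; funext n an
      rw [← Pi.single_smul]
      congr 1; simp [smul_eq_mul]; ring
    have e3 : (y.1.sum fun n an => (Pi.single (3 : Fin 5)
          (-(an * ((n : ℂ) ^ 2 + n)) * ((r • (x.2.1 (-n)).2).trace / N)) : Fin 5 → ℂ))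
        = r • (y.1.sum fun n an => (Pi.single (3 : Fin 5)
            (-(an * ((n : ℂ) ^ 2 + n)) * ((x.2.1 (-n)).2.trace / N)) : Fin 5 → ℂ)) := by
      rw [Finsupp.smul_sum]
      congr 1; funext n an
      rw [← Pi.single_smul]
      congr 1
      simp [Finsupp.smul_apply, Matrix.trace_smul, smul_eq_mul]; ring
    have e4 : ((r • x.1).sum fun n an => (Pi.single (4 : Fin 5)
          (an * y.1 (-n) * (((n : ℂ) ^ 3 - n) / 12)) : Fin 5 → ℂ))
        = r • (x.1.sum fun n an => (Pi.single (4 : Fin 5)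
            (an * y.1 (-n) * (((n : ℂ) ^ 3 - n) / 12)) : Fin 5 → ℂ)) := by
      rw [Finsupp.sum_smul_index' (by simp), Finsupp.smul_sum]
      congr 1; funext n an
      rw [← Pi.single_smul]
      congr 1; simp [smul_eq_mul]; ring
    rw [e1, e2, e3, e4, smul_add, smul_sub, smul_add]

lemma brk_add_right (B : LinearMap.BilinForm ℂ g) (x y y' : TVA N g) :
    brk B x (y + y') = brk B x y + brk B x y' := by
  simp only [brk, Prod.fst_add, Prod.snd_add, Prod.mk_add_mk, Prod.mk.injEq, Finsupp.add_apply]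
  refine ⟨?_, ?_, ?_⟩
  · have key : ∀ (n : ℤ) (an : ℂ), ((y.1 + y'.1).sum fun m am =>
        Finsupp.single (n + m) (an * am * ((n : ℂ) - m)))
        = (y.1.sum fun m am => Finsupp.single (n + m) (an * am * ((n : ℂ) - m)))
          + (y'.1.sum fun m am => Finsupp.single (n + m) (an * am * ((n : ℂ) - m))) :=
      fun n an => Finsupp.sum_add_index' (by simp) (fun m b1 b2 => by
        simp only [mul_add, add_mul, Finsupp.single_add])
    simp only [key, Finsupp.sum_add]
  · have k1 : ∀ (n : ℤ) (an : ℂ), ((y.2.1 + y'.2.1).sum fun m w =>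
        Finsupp.single (n + m) ((-(an * m)) • w))
        = (y.2.1.sum fun m w => Finsupp.single (n + m) ((-(an * m)) • w))
          + (y'.2.1.sum fun m w => Finsupp.single (n + m) ((-(an * m)) • w)) :=
      fun n an => Finsupp.sum_add_index' (by simp) (fun m w1 w2 => by
        simp only [smul_add, Finsupp.single_add])
    have k2 := Finsupp.sum_add_index' (f := y.1) (g := y'.1)
      (h := fun m am => x.2.1.sum fun n v => Finsupp.single (n + m) ((am * n) • v))
      (by simp) (fun m b1 b2 => by
        simp only [add_mul, add_smul, Finsupp.single_add, Finsupp.sum_add])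
    have k3 : ∀ (n : ℤ) (v : g × Matrix (Fin N) (Fin N) ℂ),
        ((y.2.1 + y'.2.1).sum fun m w =>
          Finsupp.single (n + m) (⁅v.1, w.1⁆, v.2 * w.2 - w.2 * v.2))
        = (y.2.1.sum fun m w => Finsupp.single (n + m) (⁅v.1, w.1⁆, v.2 * w.2 - w.2 * v.2))
          + (y'.2.1.sum fun m w => Finsupp.single (n + m) (⁅v.1, w.1⁆, v.2 * w.2 - w.2 * v.2)) := by
      intro n v
      refine Finsupp.sum_add_index' (by simp) (fun m w1 w2 => ?_)
      rw [← Finsupp.single_add]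
      refine congrArg _ (Prod.ext ?_ ?_)
      · simp [lie_add]
      · simp only [Prod.snd_add, Prod.fst_add]; noncomm_ring
    simp only [k1, k2, k3, Finsupp.sum_add]
    abel
  · have k1 : (x.2.1.sum fun n v => (n : ℂ) • KK N B v (y.2.1 (-n) + y'.2.1 (-n)))
        = (x.2.1.sum fun n v => (n : ℂ) • KK N B v (y.2.1 (-n)))
          + (x.2.1.sum fun n v => (n : ℂ) • KK N B v (y'.2.1 (-n))) := by
      simp only [KK_add_right, smul_add, Finsupp.sum_add]
    have k2 : (x.1.sum fun n an => (Pi.single (3 : Fin 5)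
          (-(an * ((n : ℂ) ^ 2 + n)) * (((y.2.1 (-n)).2 + (y'.2.1 (-n)).2).trace / N)) : Fin 5 → ℂ))
        = (x.1.sum fun n an => (Pi.single (3 : Fin 5)
            (-(an * ((n : ℂ) ^ 2 + n)) * ((y.2.1 (-n)).2.trace / N)) : Fin 5 → ℂ))
          + (x.1.sum fun n an => (Pi.single (3 : Fin 5)
            (-(an * ((n : ℂ) ^ 2 + n)) * ((y'.2.1 (-n)).2.trace / N)) : Fin 5 → ℂ)) := by
      rw [← Finsupp.sum_add]
      congr 1; funext n an
      rw [← Pi.single_add]; congr 1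
      rw [Matrix.trace_add]; ring
    have k3 := Finsupp.sum_add_index' (f := y.1) (g := y'.1)
      (h := fun n an => (Pi.single (3 : Fin 5)
        (-(an * ((n : ℂ) ^ 2 + n)) * ((x.2.1 (-n)).2.trace / N)) : Fin 5 → ℂ))
      (by simp) (fun n b1 b2 => by simp only [← Pi.single_add]; congr 1; ring)
    have k4 : (x.1.sum fun n an => (Pi.single (4 : Fin 5)
          (an * (y.1 (-n) + y'.1 (-n)) * (((n : ℂ) ^ 3 - n) / 12)) : Fin 5 → ℂ))
        = (x.1.sum fun n an => (Pi.single (4 : Fin 5)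
            (an * y.1 (-n) * (((n : ℂ) ^ 3 - n) / 12)) : Fin 5 → ℂ))
          + (x.1.sum fun n an => (Pi.single (4 : Fin 5)
            (an * y'.1 (-n) * (((n : ℂ) ^ 3 - n) / 12)) : Fin 5 → ℂ)) := by
      rw [← Finsupp.sum_add]
      congr 1; funext n an
      rw [← Pi.single_add]; congr 1; ring
    rw [k1, k2, k3, k4]
    abel

lemma brk_smul_right (B : LinearMap.BilinForm ℂ g) (r : ℂ) (x y : TVA N g) :
    brk B x (r • y) = r • brk B x y := by
  simp only [brk, Prod.smul_fst, Prod.smul_snd, Prod.smul_mk, Prod.mk.injEq, Finsupp.smul_apply]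
  refine ⟨?_, ?_, ?_⟩
  · have key : ∀ (n : ℤ) (an : ℂ), ((r • y.1).sum fun m am =>
        Finsupp.single (n + m) (an * am * ((n : ℂ) - m)))
        = r • (y.1.sum fun m am => Finsupp.single (n + m) (an * am * ((n : ℂ) - m))) := by
      intro n an
      rw [Finsupp.sum_smul_index' (by simp), Finsupp.smul_sum]
      congr 1; funext m am
      rw [Finsupp.smul_single]; congr 1; simp [smul_eq_mul]; ring
    simp only [key, ← Finsupp.smul_sum]
  · have k1 : ∀ (n : ℤ) (an : ℂ), ((r • y.2.1).sum fun m w =>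
        Finsupp.single (n + m) ((-(an * m)) • w))
        = r • (y.2.1.sum fun m w => Finsupp.single (n + m) ((-(an * m)) • w)) := by
      intro n an
      rw [Finsupp.sum_smul_index' (by simp), Finsupp.smul_sum]
      congr 1; funext m w
      rw [Finsupp.smul_single, smul_smul, smul_smul, mul_comm]
    have k2 : ((r • y.1).sum fun m am => x.2.1.sum fun n v =>
          Finsupp.single (n + m) ((am * n) • v))
        = r • (y.1.sum fun m am => x.2.1.sum fun n v => Finsupp.single (n + m) ((am * n) • v)) := by
      rw [Finsupp.sum_smul_index' (by simp), Finsupp.smul_sum]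
      congr 1; funext m am
      rw [Finsupp.smul_sum]
      congr 1; funext n v
      rw [show (r • am * (n : ℂ)) = r * (am * ((n : ℂ))) by simp [smul_eq_mul]; ring,
        ← smul_smul, Finsupp.smul_single]
    have k3 : ∀ (n : ℤ) (v : g × Matrix (Fin N) (Fin N) ℂ),
        ((r • y.2.1).sum fun m w =>
          Finsupp.single (n + m) (⁅v.1, w.1⁆, v.2 * w.2 - w.2 * v.2))
        = r • (y.2.1.sum fun m w =>
            Finsupp.single (n + m) (⁅v.1, w.1⁆, v.2 * w.2 - w.2 * v.2)) := by
      intro n v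
      rw [Finsupp.sum_smul_index' (by simp), Finsupp.smul_sum]
      congr 1; funext m w
      rw [Finsupp.smul_single]
      congr 1
      refine Prod.ext (by simp [lie_smul]) ?_
      simp only [Prod.smul_snd, Prod.smul_fst, Matrix.smul_mul, Matrix.mul_smul, smul_sub]
    simp only [k1, k2, k3, ← Finsupp.smul_sum, smul_add]
  · have k1 : (x.2.1.sum fun n v => (n : ℂ) • KK N B v (r • y.2.1 (-n)))
        = r • (x.2.1.sum fun n v => (n : ℂ) • KK N B v (y.2.1 (-n))) := by
      simp only [KK_smul_right, Finsupp.smul_sum]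
      congr 1; funext n v
      rw [smul_comm]
    have k2 : (x.1.sum fun n an => (Pi.single (3 : Fin 5)
          (-(an * ((n : ℂ) ^ 2 + n)) * ((r • (y.2.1 (-n)).2).trace / N)) : Fin 5 → ℂ))
        = r • (x.1.sum fun n an => (Pi.single (3 : Fin 5)
            (-(an * ((n : ℂ) ^ 2 + n)) * ((y.2.1 (-n)).2.trace / N)) : Fin 5 → ℂ)) := by
      rw [Finsupp.smul_sum]
      congr 1; funext n an
      rw [← Pi.single_smul]; congr 1
      rw [Matrix.trace_smul]; simp [smul_eq_mul]; ring
    have k3 : ((r • y.1).sum fun n an => (Pi.single (3 : Fin 5)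
          (-(an * ((n : ℂ) ^ 2 + n)) * ((x.2.1 (-n)).2.trace / N)) : Fin 5 → ℂ))
        = r • (y.1.sum fun n an => (Pi.single (3 : Fin 5)
            (-(an * ((n : ℂ) ^ 2 + n)) * ((x.2.1 (-n)).2.trace / N)) : Fin 5 → ℂ)) := by
      rw [Finsupp.sum_smul_index' (by simp), Finsupp.smul_sum]
      congr 1; funext n an
      rw [← Pi.single_smul]; congr 1; simp [smul_eq_mul]; ring
    have k4 : (x.1.sum fun n an => (Pi.single (4 : Fin 5)
          (an * (r • y.1 (-n)) * (((n : ℂ) ^ 3 - n) / 12)) : Fin 5 → ℂ))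
        = r • (x.1.sum fun n an => (Pi.single (4 : Fin 5)
            (an * y.1 (-n) * (((n : ℂ) ^ 3 - n) / 12)) : Fin 5 → ℂ)) := by
      rw [Finsupp.smul_sum]
      congr 1; funext n an
      rw [← Pi.single_smul]; congr 1; simp [smul_eq_mul]; ring
    rw [k1, k2, k3, k4, smul_add, smul_sub, smul_add]

variable {N : ℕ} {g : Type*} [LieRing g] [LieAlgebra ℂ g]

def Lgen' (n : ℤ) : TVA N g := (Finsupp.single n 1, 0, 0)
def Xgen' (n : ℤ) (v : g × Matrix (Fin N) (Fin N) ℂ) : TVA N g := (0, Finsupp.single n v, 0)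
def Cgen' (i : Fin 5) : TVA N g := (0, 0, Pi.single i 1)

def del (k : ℤ) : ℂ := if k = 0 then 1 else 0
@[simp] lemma del_zero : del 0 = 1 := if_pos rfl
lemma del_ne {k : ℤ} (h : k ≠ 0) : del k = 0 := if_neg h

lemma eqc {n m : ℤ} : (m = -n) = (n + m = 0) :=
  propext ⟨fun h => by omega, fun h => by omega⟩
lemma eqc' {n m : ℤ} : (n = -m) = (n + m = 0) :=
  propext ⟨fun h => by omega, fun h => by omega⟩

lemma brk_C_right (B : LinearMap.BilinForm ℂ g) (z : TVA N g) (i : Fin 5) :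
    brk B z (Cgen' i) = 0 := by
  simp [brk, Cgen', KK_zero_right, Finsupp.sum_zero_index, Finsupp.sum_fun_zero, Prod.ext_iff]

lemma brk_C_left (B : LinearMap.BilinForm ℂ g) (z : TVA N g) (i : Fin 5) :
    brk B (Cgen' i) z = 0 := by
  simp [brk, Cgen', Finsupp.sum_zero_index, Finsupp.sum_fun_zero, Prod.ext_iff]

lemma brk_L_L (B : LinearMap.BilinForm ℂ g) (n m : ℤ) :
    brk B (Lgen' n) (Lgen' m) = (((n : ℂ) - m) • Lgen' (n + m)
      + (del (n + m) * (((n : ℂ) ^ 3 - n) / 12)) • Cgen' (4 : Fin 5) : TVA N g) := by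
  refine Prod.ext ?_ (Prod.ext ?_ ?_)
  · simp only [brk, Lgen', Cgen', Prod.smul_mk, Prod.mk_add_mk]
    rw [Finsupp.sum_single_index (by simp), Finsupp.sum_single_index (by simp)]
    simp only [Finsupp.smul_single, smul_eq_mul, mul_one, one_mul, smul_zero, add_zero]
  · simp only [brk, Lgen', Cgen', Prod.smul_mk, Prod.mk_add_mk]
    rw [Finsupp.sum_single_index (by simp)]
    simp only [Finsupp.sum_zero_index, Finsupp.sum_fun_zero, smul_zero, add_zero, zero_add]
  · simp only [brk, Lgen', Cgen', Prod.smul_mk, Prod.mk_add_mk]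
    rw [Finsupp.sum_single_index (by simp), Finsupp.sum_single_index (by simp),
      Finsupp.sum_single_index (by simp)]
    simp only [Finsupp.sum_zero_index, Finsupp.coe_zero, Pi.zero_apply, Prod.snd_zero,
      Matrix.trace_zero, zero_div, mul_zero, neg_zero, zero_mul, Pi.single_zero,
      add_zero, zero_add, sub_zero, smul_zero, Finsupp.single_apply, one_mul]
    simp only [Finsupp.sum_fun_zero, ← Pi.single_smul, smul_eq_mul, mul_one]
    (try congr 1) <;> (try simp only [eqc, eqc', del]) <;> (try split_ifs) <;> (try simp) <;> (try ring) <;> (try (exfalso; omega))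

lemma brk_L_X (B : LinearMap.BilinForm ℂ g) (n m : ℤ) (v : g × Matrix (Fin N) (Fin N) ℂ) :
    brk B (Lgen' n) (Xgen' m v) = (-(m : ℂ)) • Xgen' (n + m) v
      + (del (n + m) * (-((n : ℂ) ^ 2 + n)) * (v.2.trace / N)) • Cgen' (3 : Fin 5) := by
  refine Prod.ext ?_ (Prod.ext ?_ ?_)
  · simp only [brk, Lgen', Xgen', Cgen', Prod.smul_mk, Prod.mk_add_mk]
    rw [Finsupp.sum_single_index (by simp)]
    simp only [Finsupp.sum_zero_index, smul_zero, add_zero, zero_add]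
  · simp only [brk, Lgen', Xgen', Cgen', Prod.smul_mk, Prod.mk_add_mk]
    rw [Finsupp.sum_single_index (by simp)]
    rw [Finsupp.sum_single_index (by simp)]
    simp only [Finsupp.sum_zero_index, Finsupp.sum_fun_zero, Finsupp.smul_single, smul_zero,
      add_zero, zero_add, one_mul, smul_smul, neg_mul, mul_one]
  · simp only [brk, Lgen', Xgen', Cgen', Prod.smul_mk, Prod.mk_add_mk]
    rw [Finsupp.sum_single_index (by simp)]
    simp only [Finsupp.sum_zero_index, Finsupp.coe_zero, Pi.zero_apply, Prod.snd_zero,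
      Matrix.trace_zero, zero_div, mul_zero, neg_zero, zero_mul, Pi.single_zero,
      add_zero, zero_add, sub_zero, smul_zero, Finsupp.single_apply, one_mul]
    simp only [Finsupp.sum_fun_zero, ← Pi.single_smul, smul_eq_mul, mul_one]
    (try congr 1) <;> (try simp only [eqc, eqc', del]) <;> (try split_ifs) <;> (try simp) <;> (try ring) <;> (try (exfalso; omega))

lemma brk_X_L (B : LinearMap.BilinForm ℂ g) (n m : ℤ) (v : g × Matrix (Fin N) (Fin N) ℂ) :
    brk B (Xgen' n v) (Lgen' m) = (n : ℂ) • Xgen' (n + m) v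
      + (del (n + m) * ((m : ℂ) ^ 2 + m) * (v.2.trace / N)) • Cgen' (3 : Fin 5) := by
  refine Prod.ext ?_ (Prod.ext ?_ ?_)
  · simp only [brk, Lgen', Xgen', Cgen', Prod.smul_mk, Prod.mk_add_mk,
      Finsupp.sum_zero_index, smul_zero, add_zero, zero_add]
  · simp only [brk, Lgen', Xgen', Cgen', Prod.smul_mk, Prod.mk_add_mk]
    rw [Finsupp.sum_single_index (by simp)]
    rw [Finsupp.sum_single_index (by simp)]
    simp only [Finsupp.sum_zero_index, Finsupp.sum_fun_zero, Finsupp.smul_single, smul_zero,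
      add_zero, zero_add, one_mul, smul_smul]
  · simp only [brk, Lgen', Xgen', Cgen', Prod.smul_mk, Prod.mk_add_mk]
    rw [Finsupp.sum_single_index (by simp [KK_zero_left]), Finsupp.sum_single_index (by simp)]
    simp only [Finsupp.sum_zero_index, Finsupp.coe_zero, Pi.zero_apply, Prod.snd_zero,
      Matrix.trace_zero, zero_div, mul_zero, neg_zero, zero_mul, Pi.single_zero,
      add_zero, zero_add, zero_sub, smul_zero, Finsupp.single_apply, one_mul,
      KK_zero_right]
    rw [← Pi.single_neg]
    simp only [Finsupp.sum_fun_zero, ← Pi.single_smul, smul_eq_mul, mul_one]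
    (try congr 1) <;> (try simp only [eqc, eqc', del]) <;> (try split_ifs) <;> (try simp) <;> (try ring) <;> (try (exfalso; omega))

lemma brk_X_X (B : LinearMap.BilinForm ℂ g) (n m : ℤ) (v w : g × Matrix (Fin N) (Fin N) ℂ) :
    brk B (Xgen' n v) (Xgen' m w)
      = Xgen' (n + m) (⁅v.1, w.1⁆, v.2 * w.2 - w.2 * v.2)
        + (del (n + m) * n) • ((B v.1 w.1) • Cgen' (0 : Fin 5)
            + ((v.2 * w.2).trace - v.2.trace * w.2.trace / N) • Cgen' (1 : Fin 5)
            + (v.2.trace * w.2.trace / (N : ℂ) ^ 2) • Cgen' (2 : Fin 5)) := by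
  refine Prod.ext ?_ (Prod.ext ?_ ?_)
  · simp only [brk, Xgen', Cgen', Prod.smul_mk, Prod.mk_add_mk, Finsupp.sum_zero_index,
      Finsupp.sum_fun_zero, smul_zero, add_zero, zero_add]
  · simp only [brk, Xgen', Cgen', Prod.smul_mk, Prod.mk_add_mk]
    rw [Finsupp.sum_single_index (by simp), Finsupp.sum_single_index (by simp)]
    simp only [Finsupp.sum_zero_index, Finsupp.sum_fun_zero, smul_zero, add_zero, zero_add]
  · simp only [brk, Xgen', Cgen', Prod.smul_mk, Prod.mk_add_mk]
    rw [Finsupp.sum_single_index (by simp [KK_zero_left])]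
    simp only [Finsupp.sum_zero_index, Finsupp.sum_fun_zero, smul_zero, add_zero, zero_add,
      sub_zero, Finsupp.single_apply]
    funext i
    by_cases h : n + m = 0
    · have h2 : m = -n := by omega
      subst h2
      simp only [if_pos rfl, del, if_pos h]
      fin_cases i <;>
        simp [KK, Pi.single_apply, Finsupp.single_apply, smul_eq_mul] <;> ring
    · have h2 : ¬ (m = -n) := by omega
      simp only [if_neg h2, del_ne h, zero_mul, zero_smul, KK_zero_right]
      simp

variable {N : ℕ} {g : Type*} [LieRing g] [LieAlgebra ℂ g]

lemma trc (X Y : Matrix (Fin N) (Fin N) ℂ) : (X * Y - Y * X).trace = 0 := by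
  rw [Matrix.trace_sub, Matrix.trace_mul_comm, sub_self]

lemma trace_comm_mul (X Y Z : Matrix (Fin N) (Fin N) ℂ) :
    ((X * Y - Y * X) * Z).trace = (X * (Y * Z)).trace - (X * (Z * Y)).trace := by
  rw [Matrix.sub_mul, Matrix.trace_sub, mul_assoc, Matrix.trace_mul_cycle Y X Z,
    Matrix.trace_mul_cycle Z Y X, mul_assoc]

lemma trace_rot (A B C : Matrix (Fin N) (Fin N) ℂ) :
    (A * (B * C)).trace = (C * (A * B)).trace := by
  rw [← mul_assoc, ← mul_assoc, Matrix.trace_mul_cycle]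

lemma Xgen'_neg (n : ℤ) (v : g × Matrix (Fin N) (Fin N) ℂ) :
    (Xgen' n (-v) : TVA N g) = -Xgen' n v := by
  simp [Xgen', Prod.ext_iff, Finsupp.single_neg]

lemma jac_LLL (B : LinearMap.BilinForm ℂ g) (n m p : ℤ) :
    brk B (brk B (Lgen' n) (Lgen' m)) (Lgen' p)
      + brk B (brk B (Lgen' m) (Lgen' p)) (Lgen' n)
      + brk B (brk B (Lgen' p) (Lgen' n)) (Lgen' m) = (0 : TVA N g) := by
  simp only [brk_L_L, brk_add_left, brk_smul_left, brk_C_left, smul_zero, add_zero,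
    zero_add, smul_add, smul_smul]
  by_cases h : n + m + p = 0
  · obtain rfl : p = -n - m := by omega
    simp only [del]
    split_ifs <;> (try (exfalso; omega))
    all_goals (ring_nf; match_scalars <;> ring)
  · simp only [del]
    split_ifs <;> (try (exfalso; omega))
    all_goals (ring_nf; match_scalars <;> ring)

lemma jac_LLX (B : LinearMap.BilinForm ℂ g) (n m p : ℤ) (v : g × Matrix (Fin N) (Fin N) ℂ) :
    brk B (brk B (Lgen' n) (Lgen' m)) (Xgen' p v)
      + brk B (brk B (Lgen' m) (Xgen' p v)) (Lgen' n)
      + brk B (brk B (Xgen' p v) (Lgen' n)) (Lgen' m) = (0 : TVA N g) := by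
  simp only [brk_L_L, brk_L_X, brk_X_L, brk_add_left, brk_smul_left, brk_C_left,
    smul_zero, add_zero, zero_add, smul_add, smul_smul]
  by_cases h : n + m + p = 0
  · obtain rfl : p = -n - m := by omega
    simp only [del]
    split_ifs <;> (try (exfalso; omega))
    all_goals (ring_nf; match_scalars <;> ring)
  · simp only [del]
    split_ifs <;> (try (exfalso; omega))
    all_goals (ring_nf; match_scalars <;> ring)

lemma Xgen'_add (n : ℤ) (v w : g × Matrix (Fin N) (Fin N) ℂ) :
    (Xgen' n (v + w) : TVA N g) = Xgen' n v + Xgen' n w := by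
  simp [Xgen', Prod.ext_iff, Finsupp.single_add]

lemma jac_LXX (B : LinearMap.BilinForm ℂ g) (hsymm : ∀ x y : g, B x y = B y x)
    (n m p : ℤ) (v w : g × Matrix (Fin N) (Fin N) ℂ) :
    brk B (brk B (Lgen' n) (Xgen' m v)) (Xgen' p w)
      + brk B (brk B (Xgen' m v) (Xgen' p w)) (Lgen' n)
      + brk B (brk B (Xgen' p w) (Lgen' n)) (Xgen' m v) = (0 : TVA N g) := by
  simp only [brk_L_X, brk_X_L, brk_X_X, brk_add_left, brk_smul_left, brk_C_left,
    smul_zero, add_zero, zero_add, smul_add, smul_smul, trc, zero_div, mul_zero]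
  rw [show ((⁅w.1, v.1⁆, w.2 * v.2 - v.2 * w.2) : g × Matrix (Fin N) (Fin N) ℂ)
      = -(⁅v.1, w.1⁆, v.2 * w.2 - w.2 * v.2) from
    Prod.ext (by simp only [Prod.fst_neg]; rw [← lie_skew])
      (by simp only [Prod.snd_neg]; noncomm_ring)]
  rw [Xgen'_neg]
  rw [show (B w.1) v.1 = (B v.1) w.1 from hsymm w.1 v.1,
    Matrix.trace_mul_comm w.2 v.2]
  by_cases h : n + m + p = 0
  · obtain rfl : p = -n - m := by omega
    simp only [del]
    split_ifs <;> (try (exfalso; omega))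
    all_goals (ring_nf; match_scalars <;> ring)
  · simp only [del]
    split_ifs <;> (try (exfalso; omega))
    all_goals (ring_nf; match_scalars <;> ring)

lemma jac_XXX (B : LinearMap.BilinForm ℂ g) (hsymm : ∀ x y : g, B x y = B y x)
    (hinv : ∀ x y z : g, B ⁅x, y⁆ z = B x ⁅y, z⁆)
    (n m p : ℤ) (u v w : g × Matrix (Fin N) (Fin N) ℂ) :
    brk B (brk B (Xgen' n u) (Xgen' m v)) (Xgen' p w)
      + brk B (brk B (Xgen' m v) (Xgen' p w)) (Xgen' n u)
      + brk B (brk B (Xgen' p w) (Xgen' n u)) (Xgen' m v) = (0 : TVA N g) := by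
  simp only [brk_X_X, brk_add_left, brk_smul_left, brk_C_left,
    smul_zero, add_zero, zero_add, smul_add, smul_smul, trc, zero_div, mul_zero, zero_mul]
  have hb3 : ((⁅⁅w.1, u.1⁆, v.1⁆ : g),
        (w.2 * u.2 - u.2 * w.2) * v.2 - v.2 * (w.2 * u.2 - u.2 * w.2))
      = -((⁅⁅u.1, v.1⁆, w.1⁆ : g),
            (u.2 * v.2 - v.2 * u.2) * w.2 - w.2 * (u.2 * v.2 - v.2 * u.2))
        + -((⁅⁅v.1, w.1⁆, u.1⁆ : g),
            (v.2 * w.2 - w.2 * v.2) * u.2 - u.2 * (v.2 * w.2 - w.2 * v.2)) := by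
    refine Prod.ext ?_ ?_
    · simp only [Prod.fst_add, Prod.fst_neg]
      have hj := lie_jacobi u.1 v.1 w.1
      rw [show ⁅w.1, u.1⁆ = -⁅u.1, w.1⁆ from by rw [← lie_skew], lie_neg] at hj
      have hz : ⁅v.1, ⁅u.1, w.1⁆⁆ = ⁅u.1, ⁅v.1, w.1⁆⁆ + ⁅w.1, ⁅u.1, v.1⁆⁆ := by
        rw [eq_comm, ← sub_eq_zero, ← hj]; abel
      rw [lie_lie, lie_lie, lie_lie,
        show ⁅w.1, v.1⁆ = -⁅v.1, w.1⁆ from by rw [← lie_skew],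
        show ⁅w.1, u.1⁆ = -⁅u.1, w.1⁆ from by rw [← lie_skew],
        show ⁅v.1, u.1⁆ = -⁅u.1, v.1⁆ from by rw [← lie_skew]]
      simp only [lie_neg]
      rw [hz]
      abel
    · simp only [Prod.snd_add, Prod.snd_neg]
      noncomm_ring
  rw [hb3, Xgen'_add, Xgen'_neg, Xgen'_neg]
  rw [show (B ⁅v.1, w.1⁆) u.1 = (B ⁅u.1, v.1⁆) w.1 from
      (hsymm _ _).trans (hinv u.1 v.1 w.1).symm,
    show (B ⁅w.1, u.1⁆) v.1 = (B ⁅u.1, v.1⁆) w.1 from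
      (hinv w.1 u.1 v.1).trans (hsymm w.1 ⁅u.1, v.1⁆)]
  rw [trace_comm_mul u.2 v.2 w.2, trace_comm_mul v.2 w.2 u.2, trace_comm_mul w.2 u.2 v.2,
    show ((v.2 * (u.2 * w.2)).trace = (u.2 * (w.2 * v.2)).trace) from
      (trace_rot _ _ _).trans (trace_rot _ _ _),
    show ((w.2 * (u.2 * v.2)).trace = (u.2 * (v.2 * w.2)).trace) from
      (trace_rot _ _ _).trans (trace_rot _ _ _),
    trace_rot v.2 w.2 u.2, trace_rot w.2 v.2 u.2]
  by_cases h : n + m + p = 0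
  · obtain rfl : p = -n - m := by omega
    simp only [del]
    split_ifs <;> (try (exfalso; omega))
    all_goals (ring_nf; match_scalars <;> ring)
  · simp only [del]
    split_ifs <;> (try (exfalso; omega))
    all_goals (ring_nf; match_scalars <;> ring)

variable {N : ℕ} {g : Type*} [LieRing g] [LieAlgebra ℂ g]

lemma brk_zero_left (B : LinearMap.BilinForm ℂ g) (y : TVA N g) : brk B 0 y = 0 := by
  have h := brk_smul_left B 0 0 y
  simpa using h

lemma brk_zero_right (B : LinearMap.BilinForm ℂ g) (x : TVA N g) : brk B x 0 = 0 := by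
  have h := brk_smul_right B 0 x 0
  simpa using h

lemma asym_LL (B : LinearMap.BilinForm ℂ g) (n m : ℤ) :
    brk B (Lgen' n) (Lgen' m) + brk B (Lgen' m) (Lgen' n) = (0 : TVA N g) := by
  simp only [brk_L_L]
  by_cases h : n + m = 0
  · obtain rfl : m = -n := by omega
    simp only [del]
    split_ifs <;> (try (exfalso; omega))
    all_goals (ring_nf; match_scalars <;> ring)
  · simp only [del]
    split_ifs <;> (try (exfalso; omega))
    all_goals (ring_nf; match_scalars <;> ring)

lemma asym_LX (B : LinearMap.BilinForm ℂ g) (n m : ℤ) (v : g × Matrix (Fin N) (Fin N) ℂ) :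
    brk B (Lgen' n) (Xgen' m v) + brk B (Xgen' m v) (Lgen' n) = (0 : TVA N g) := by
  simp only [brk_L_X, brk_X_L]
  by_cases h : n + m = 0
  · obtain rfl : m = -n := by omega
    simp only [del]
    split_ifs <;> (try (exfalso; omega))
    all_goals (ring_nf; match_scalars <;> ring)
  · simp only [del]
    split_ifs <;> (try (exfalso; omega))
    all_goals (ring_nf; match_scalars <;> ring)

lemma asym_XX (B : LinearMap.BilinForm ℂ g) (hsymm : ∀ x y : g, B x y = B y x)
    (n m : ℤ) (v w : g × Matrix (Fin N) (Fin N) ℂ) :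
    brk B (Xgen' n v) (Xgen' m w) + brk B (Xgen' m w) (Xgen' n v) = (0 : TVA N g) := by
  simp only [brk_X_X]
  rw [show ((⁅w.1, v.1⁆, w.2 * v.2 - v.2 * w.2) : g × Matrix (Fin N) (Fin N) ℂ)
      = -(⁅v.1, w.1⁆, v.2 * w.2 - w.2 * v.2) from
    Prod.ext (by simp only [Prod.fst_neg]; rw [← lie_skew])
      (by simp only [Prod.snd_neg]; noncomm_ring)]
  rw [Xgen'_neg]
  rw [show (B w.1) v.1 = (B v.1) w.1 from hsymm w.1 v.1,
    Matrix.trace_mul_comm w.2 v.2]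
  by_cases h : n + m = 0
  · obtain rfl : m = -n := by omega
    simp only [del]
    split_ifs <;> (try (exfalso; omega))
    all_goals (ring_nf; match_scalars <;> ring)
  · simp only [del]
    split_ifs <;> (try (exfalso; omega))
    all_goals (ring_nf; match_scalars <;> ring)

/-- generating set -/
def genSet (N : ℕ) (g : Type*) [LieRing g] [LieAlgebra ℂ g] : Set (TVA N g) :=
  Set.range (Lgen' : ℤ → TVA N g)
    ∪ Set.range (fun p : ℤ × (g × Matrix (Fin N) (Fin N) ℂ) => Xgen' p.1 p.2)
    ∪ Set.range (Cgen' : Fin 5 → TVA N g)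

lemma span_genSet : Submodule.span ℂ (genSet N g) = ⊤ := by
  rw [eq_top_iff]
  rintro ⟨a, f, c⟩ -
  have h1 : ((a, 0, 0) : TVA N g) ∈ Submodule.span ℂ (genSet N g) := by
    induction a using Finsupp.induction_linear with
    | zero => exact Submodule.zero_mem _
    | add p q hp hq =>
      have : ((p + q, 0, 0) : TVA N g) = (p, 0, 0) + (q, 0, 0) := by
        simp [Prod.ext_iff]
      rw [this]; exact Submodule.add_mem _ hp hq
    | single n r =>
      have : ((Finsupp.single n r, 0, 0) : TVA N g) = r • Lgen' n := by
        refine Prod.ext ?_ (Prod.ext ?_ ?_)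
        · show Finsupp.single n r = (r • Lgen' n).1
          simp only [Lgen', Prod.smul_mk, Finsupp.smul_single, smul_eq_mul, mul_one]
        · simp [Lgen']
        · simp [Lgen']
      rw [this]
      exact Submodule.smul_mem _ _ (Submodule.subset_span (Or.inl (Or.inl ⟨n, rfl⟩)))
  have h2 : ((0, f, 0) : TVA N g) ∈ Submodule.span ℂ (genSet N g) := by
    induction f using Finsupp.induction_linear with
    | zero => exact Submodule.zero_mem _
    | add p q hp hq =>
      have : ((0, p + q, 0) : TVA N g) = (0, p, 0) + (0, q, 0) := by
        simp [Prod.ext_iff]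
      rw [this]; exact Submodule.add_mem _ hp hq
    | single n v =>
      exact Submodule.subset_span (Or.inl (Or.inr ⟨(n, v), rfl⟩))
  have h3 : ((0, 0, c) : TVA N g) ∈ Submodule.span ℂ (genSet N g) := by
    have : ((0, 0, c) : TVA N g) = ∑ i : Fin 5, c i • Cgen' i := by
      refine Prod.ext ?_ (Prod.ext ?_ ?_) <;>
        simp [Cgen', Prod.fst_sum, Prod.snd_sum, ← Pi.single_smul, Finset.univ_sum_single]
    rw [this]
    exact Submodule.sum_mem _ fun i _ =>
      Submodule.smul_mem _ _ (Submodule.subset_span (Or.inr ⟨i, rfl⟩))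
  have : ((a, f, c) : TVA N g) = (a, 0, 0) + (0, f, 0) + (0, 0, c) := by
    simp [Prod.ext_iff]
  rw [this]
  exact Submodule.add_mem _ (Submodule.add_mem _ h1 h2) h3

lemma span_vanish2 {M P : Type*} [AddCommGroup M] [Module ℂ M] [AddCommGroup P] [Module ℂ P]
    {S : Set M} (hS : Submodule.span ℂ S = ⊤) {T : M → M → P}
    (hl : ∀ y, IsLinearMap ℂ (fun x => T x y)) (hr : ∀ x, IsLinearMap ℂ (T x))
    (hgen : ∀ s ∈ S, ∀ t ∈ S, T s t = 0) : ∀ x y, T x y = 0 := by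
  have key : ∀ s ∈ S, ∀ y, T s y = 0 := by
    intro s hs y
    have hy : y ∈ Submodule.span ℂ S := by rw [hS]; trivial
    induction hy using Submodule.span_induction with
    | mem t ht => exact hgen s hs t ht
    | zero => have := (hr s).map_smul 0 0; simpa using this
    | add a b _ _ iha ihb => rw [(hr s).map_add, iha, ihb, add_zero]
    | smul r a _ ih => rw [(hr s).map_smul, ih, smul_zero]
  intro x y
  have hx : x ∈ Submodule.span ℂ S := by rw [hS]; trivial
  induction hx using Submodule.span_induction with
  | mem s hs => exact key s hs y
  | zero => have := (hl y).map_smul 0 0; simpa using this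
  | add a b _ _ iha ihb =>
    have := (hl y).map_add a b
    rw [this, iha, ihb, add_zero]
  | smul r a _ ih =>
    have := (hl y).map_smul r a
    rw [this, ih, smul_zero]

lemma span_vanish3 {M P : Type*} [AddCommGroup M] [Module ℂ M] [AddCommGroup P] [Module ℂ P]
    {S : Set M} (hS : Submodule.span ℂ S = ⊤) {T : M → M → M → P}
    (h1 : ∀ y z, IsLinearMap ℂ (fun x => T x y z))
    (h2 : ∀ x z, IsLinearMap ℂ (fun y => T x y z))
    (h3 : ∀ x y, IsLinearMap ℂ (fun z => T x y z))
    (hgen : ∀ s ∈ S, ∀ t ∈ S, ∀ u ∈ S, T s t u = 0) : ∀ x y z, T x y z = 0 := by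
  have key2 : ∀ s ∈ S, ∀ t ∈ S, ∀ z, T s t z = 0 := by
    intro s hs t ht z
    have hz : z ∈ Submodule.span ℂ S := by rw [hS]; trivial
    induction hz using Submodule.span_induction with
    | mem u hu => exact hgen s hs t ht u hu
    | zero => have := (h3 s t).map_smul 0 0; simpa using this
    | add a b _ _ iha ihb =>
      have := (h3 s t).map_add a b
      rw [this, iha, ihb, add_zero]
    | smul r a _ ih =>
      have := (h3 s t).map_smul r a
      rw [this, ih, smul_zero]
  have key1 : ∀ s ∈ S, ∀ y z, T s y z = 0 := by
    intro s hs y z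
    have hy : y ∈ Submodule.span ℂ S := by rw [hS]; trivial
    induction hy using Submodule.span_induction with
    | mem t ht => exact key2 s hs t ht z
    | zero => have := (h2 s z).map_smul 0 0; simpa using this
    | add a b _ _ iha ihb =>
      have := (h2 s z).map_add a b
      rw [this, iha, ihb, add_zero]
    | smul r a _ ih =>
      have := (h2 s z).map_smul r a
      rw [this, ih, smul_zero]
  intro x y z
  have hx : x ∈ Submodule.span ℂ S := by rw [hS]; trivial
  induction hx using Submodule.span_induction with
  | mem s hs => exact key1 s hs y z
  | zero => have := (h1 y z).map_smul 0 0; simpa using this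
  | add a b _ _ iha ihb =>
    have := (h1 y z).map_add a b
    rw [this, iha, ihb, add_zero]
  | smul r a _ ih =>
    have := (h1 y z).map_smul r a
    rw [this, ih, smul_zero]

lemma brk_antisym (B : LinearMap.BilinForm ℂ g) (hsymm : ∀ x y : g, B x y = B y x) :
    ∀ x y : TVA N g, brk B x y + brk B y x = 0 := by
  refine span_vanish2 (span_genSet (N := N) (g := g)) (T := fun x y => brk B x y + brk B y x)
    (fun y => ⟨fun a b => by simp only [brk_add_left, brk_add_right]; try abel,
               fun r a => by simp only [brk_smul_left, brk_smul_right, smul_add]⟩)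
    (fun x => ⟨fun a b => by simp only [brk_add_left, brk_add_right]; try abel,
               fun r a => by simp only [brk_smul_left, brk_smul_right, smul_add]⟩) ?_
  have csimp : ∀ (z : TVA N g) (i : Fin 5),
      brk B z (Cgen' i) + brk B (Cgen' i) z = 0 := fun z i => by
    rw [brk_C_left, brk_C_right, add_zero]
  rintro s ((⟨n, rfl⟩ | ⟨⟨n, v⟩, rfl⟩) | ⟨i, rfl⟩) t ((⟨m, rfl⟩ | ⟨⟨m, w⟩, rfl⟩) | ⟨j, rfl⟩) <;>
    try dsimp only
  · exact asym_LL B n m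
  · exact asym_LX B n m w
  · exact csimp _ j
  · rw [add_comm]; exact asym_LX B m n v
  · exact asym_XX B hsymm n m v w
  · exact csimp _ j
  · rw [add_comm]; exact csimp _ i
  · rw [add_comm]; exact csimp _ i
  · exact csimp _ i

lemma brk_jacobi (B : LinearMap.BilinForm ℂ g) (hsymm : ∀ x y : g, B x y = B y x)
    (hinv : ∀ x y z : g, B ⁅x, y⁆ z = B x ⁅y, z⁆) :
    ∀ x y z : TVA N g,
      brk B (brk B x y) z + brk B (brk B y z) x + brk B (brk B z x) y = 0 := by
  refine span_vanish3 (span_genSet (N := N) (g := g))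
    (T := fun x y z => brk B (brk B x y) z + brk B (brk B y z) x + brk B (brk B z x) y)
    (fun y z => ⟨fun a b => by
        simp only [brk_add_left, brk_add_right]; try abel,
      fun r a => by
        simp only [brk_smul_left, brk_smul_right, smul_add]⟩)
    (fun x z => ⟨fun a b => by
        simp only [brk_add_left, brk_add_right]; try abel,
      fun r a => by
        simp only [brk_smul_left, brk_smul_right, smul_add]⟩)
    (fun x y => ⟨fun a b => by
        simp only [brk_add_left, brk_add_right]; try abel,
      fun r a => by
        simp only [brk_smul_left, brk_smul_right, smul_add]⟩) ?_
  have csimp1 : ∀ (y z : TVA N g) (i : Fin 5),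
      brk B (brk B (Cgen' i) y) z + brk B (brk B y z) (Cgen' i)
        + brk B (brk B z (Cgen' i)) y = 0 := fun y z i => by
    rw [brk_C_left, brk_C_right, brk_C_right, brk_zero_left, brk_zero_left]
    simp only [add_zero]
  have csimp2 : ∀ (x z : TVA N g) (i : Fin 5),
      brk B (brk B x (Cgen' i)) z + brk B (brk B (Cgen' i) z) x
        + brk B (brk B z x) (Cgen' i) = 0 := fun x z i => by
    rw [brk_C_left, brk_C_right, brk_C_right, brk_zero_left, brk_zero_left]
    simp only [add_zero]
  have csimp3 : ∀ (x y : TVA N g) (i : Fin 5),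
      brk B (brk B x y) (Cgen' i) + brk B (brk B y (Cgen' i)) x
        + brk B (brk B (Cgen' i) x) y = 0 := fun x y i => by
    rw [brk_C_left, brk_C_right, brk_C_right, brk_zero_left, brk_zero_left]
    simp only [add_zero, zero_add]
  rintro s ((⟨n, rfl⟩ | ⟨⟨n, v⟩, rfl⟩) | ⟨i, rfl⟩) t ((⟨m, rfl⟩ | ⟨⟨m, w⟩, rfl⟩) | ⟨j, rfl⟩)
    u ((⟨p, rfl⟩ | ⟨⟨p, x⟩, rfl⟩) | ⟨k, rfl⟩) <;>
    try dsimp only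
  · rw [← jac_LLL B n m p]; try abel
  · rw [← jac_LLX B n m p x]; try abel
  · exact csimp3 _ _ k
  · rw [← jac_LLX B p n m w]; try abel
  · rw [← jac_LXX B hsymm n m p w x]; try abel
  · exact csimp3 _ _ k
  · exact csimp2 _ _ j
  · exact csimp2 _ _ j
  · exact csimp2 _ _ j
  · rw [← jac_LLX B m p n v]; try abel
  · rw [← jac_LXX B hsymm m p n x v]; try abel
  · exact csimp3 _ _ k
  · rw [← jac_LXX B hsymm p n m v w]; try abel
  · rw [← jac_XXX B hsymm hinv n m p v w x]; try abel
  · exact csimp3 _ _ k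
  · exact csimp2 _ _ j
  · exact csimp2 _ _ j
  · exact csimp2 _ _ j
  · exact csimp1 _ _ i
  · exact csimp1 _ _ i
  · exact csimp1 _ _ i
  · exact csimp1 _ _ i
  · exact csimp1 _ _ i
  · exact csimp1 _ _ i
  · exact csimp1 _ _ i
  · exact csimp1 _ _ i
  · exact csimp1 _ _ i

end TVAwork

open TVAwork

/-- The twisted Virasoro-affine brackets define a Lie algebra structure on
`f = (⊕_n ℂL(n)) ⊕ (ℂ[t₀,t₀⁻¹] ⊗ (ġ ⊕ gl_N)) ⊕ ℂC_ġ ⊕ ℂC_{sl_N} ⊕ ℂC_Hei ⊕ ℂC_VH ⊕ ℂC_Vir`: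
there is a bilinear bracket satisfying the listed structure formulas, which is alternating
and satisfies the Jacobi identity — so the semidirect product of the Witt algebra with the
loop algebra of `ġ ⊕ gl_N` admits this 5-dimensional central extension. -/
theorem statement11 (N : ℕ) (hN : 1 ≤ N) (g : Type*) [LieRing g] [LieAlgebra ℂ g]
    [FiniteDimensional ℂ g] [LieAlgebra.IsSimple ℂ g]
    (B : LinearMap.BilinForm ℂ g)
    (hsymm : ∀ x y : g, B x y = B y x)
    (hinv : ∀ x y z : g, B ⁅x, y⁆ z = B x ⁅y, z⁆)
    (hnd : ∀ x : g, x ≠ 0 → ∃ y : g, B x y ≠ 0) :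
    ∃ br : TVA N g → TVA N g → TVA N g, IsTVABracket B br := by
  have hN0 : ((N : ℂ)) ≠ 0 := Nat.cast_ne_zero.mpr (by omega)
  have Lg : ∀ n : ℤ, (Lgen n : TVA N g) = Lgen' n := fun _ => rfl
  have Xg : ∀ (n : ℤ) (v : g × Matrix (Fin N) (Fin N) ℂ),
      (Xgen n v : TVA N g) = Xgen' n v := fun _ _ => rfl
  have Cg : ∀ i : Fin 5, (Cgen i : TVA N g) = Cgen' i := fun _ => rfl
  refine ⟨brk B, ?_, ?_, ?_, ?_, ?_, ?_, ?_, ?_, ?_, ?_, ?_, ?_, ?_⟩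
  · exact fun y => ⟨fun a b => brk_add_left B a b y, fun c a => brk_smul_left B c a y⟩
  · exact fun x => ⟨fun a b => brk_add_right B x a b, fun c a => brk_smul_right B c x a⟩
  · intro x
    have h := brk_antisym B hsymm x x
    have h2 : (2 : ℂ) • brk B x x = 0 := by rw [show ((2:ℂ)) = 1 + 1 by norm_num, add_smul (1:ℂ) 1 (brk B x x), one_smul]; exact h
    exact (smul_eq_zero.mp h2).resolve_left two_ne_zero
  · exact brk_jacobi B hsymm hinv
  · -- L L
    intro n m
    simp only [Lg, Cg, brk_L_L]
    congr 1
    simp only [del]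
    split_ifs <;> match_scalars <;> ring
  · -- g g
    intro n m x y
    simp only [Lg, Xg, Cg, brk_X_X]
    simp only [zero_mul, mul_zero, sub_zero, Matrix.trace_zero, zero_div, zero_smul,
      smul_zero, add_zero, zero_add, smul_smul, sub_self]
    simp only [del]
    split_ifs <;> match_scalars <;> ring
  · -- sl sl
    intro n m X Y hX hY
    simp only [Lg, Xg, Cg, brk_X_X]
    simp only [zero_lie, map_zero, LinearMap.zero_apply, zero_smul, zero_add, add_zero,
      hX, hY, zero_mul, mul_zero, zero_div, sub_zero, smul_smul]
    simp only [del]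
    split_ifs <;> match_scalars <;> ring
  · -- I I
    intro n m
    simp only [Lg, Xg, Cg, brk_X_X]
    simp only [zero_lie, lie_zero, map_zero, LinearMap.zero_apply, zero_smul, zero_add,
      add_zero, one_mul, mul_one, sub_self, Matrix.trace_one, Fintype.card_fin, smul_smul]
    rw [show (Xgen' (n + m) ((0 : g), (0 : Matrix (Fin N) (Fin N) ℂ)) : TVA N g) = 0 from by
      simp [Xgen', Prod.ext_iff]]
    simp only [del, zero_add]
    split_ifs <;> match_scalars <;> field_simp <;> (try (left; ring)) <;> simp
  · -- sl I
    intro n m X hX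
    simp only [Lg, Xg, Cg, brk_X_X]
    simp only [zero_lie, lie_zero, map_zero, LinearMap.zero_apply, zero_smul, zero_add,
      add_zero, one_mul, mul_one, sub_self, hX, zero_mul, zero_div, sub_zero,
      Matrix.trace_one, Fintype.card_fin, smul_smul, mul_zero, smul_zero]
    simp [Xgen', Prod.ext_iff]
  · -- g gl
    intro n m x Y
    simp only [Lg, Xg, Cg, brk_X_X]
    simp only [lie_zero, zero_lie, zero_mul, mul_zero, sub_zero, sub_self,
      Matrix.trace_zero, zero_div, zero_smul, smul_zero, add_zero, zero_add,
      map_zero]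
    simp [Xgen', Prod.ext_iff]
  · -- L x
    intro n m x X hX
    simp only [Lg, Xg, Cg, brk_L_X]
    simp only [hX, zero_div, mul_zero, zero_smul, add_zero]
  · -- L I
    intro n m
    simp only [Lg, Xg, Cg, brk_L_X]
    simp only [Matrix.trace_one, Fintype.card_fin]
    simp only [del]
    split_ifs <;> match_scalars <;> field_simp <;> (try (left; ring)) <;> simp
  · -- central
    exact fun i z => by
      rw [Cg]
      exact ⟨brk_C_right B z i, brk_C_left B z i⟩
end
end

section
/- (Content of Corollary 5.2(iii)) Let N ≥ 1 be an integer, μ, c, c_Vir ∈ ℂ, and let M be a module over the twisted Virasoro–Heisenberg algebra HVir on which C_Hei acts as the scalar N(1−μc), C_VH as the scalar N/2, and C_Vir as the scalar c_Vir. Define operators on M by L̄(n) = L(n) + (n/N) I(n) + δ_{n,0}(1/2 − (1−μc)/(2N))·Id. Then these operators satisfy the Virasoro commutation relations with central charge c_Vir + 12 − (12/N)(1−μc): for all n, m ∈ ℤ, [L̄(n), L̄(m)] = (n−m) L̄(n+m) + ((n³−n)/12) δ_{n,−m} (c_Vir + 12 − (12/N)(1−μc))·Id. -/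
noncomputable section

/-- content of Corollary 5.2(iii). Let `N ≥ 1`, `μ, c, c_Vir ∈ ℂ`, and let
`M` be a module over the twisted Virasoro–Heisenberg algebra `HVir`, given by operators
`L(n)`, `I(n)` satisfying the twisted Virasoro–Heisenberg relations in which `C_Hei` acts as
the scalar `N(1−μc)`, `C_VH` as the scalar `N/2`, and `C_Vir` as the scalar `c_Vir`. Then the
operators `L̄(n) = L(n) + (n/N) I(n) + δ_{n,0}(1/2 − (1−μc)/(2N))·Id` satisfy the Virasoro
commutation relations with central charge `c_Vir + 12 − (12/N)(1−μc)`. -/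
theorem statement15 (N : ℕ) (hN : 1 ≤ N) (μ c cVir : ℂ)
    (M : Type*) [AddCommGroup M] [Module ℂ M]
    (Lop Iop : ℤ → Module.End ℂ M)
    (hLL : ∀ n m : ℤ, ⁅Lop n, Lop m⁆
      = ((n : ℂ) - m) • Lop (n + m)
        + (if n + m = 0 then ((n : ℂ) ^ 3 - n) / 12 * cVir else 0) • (1 : Module.End ℂ M))
    (hII : ∀ n m : ℤ, ⁅Iop n, Iop m⁆
      = (if n + m = 0 then (n : ℂ) * ((N : ℂ) * (1 - μ * c)) else 0) • (1 : Module.End ℂ M))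
    (hLI : ∀ n m : ℤ, ⁅Lop n, Iop m⁆
      = (-(m : ℂ)) • Iop (n + m)
        + (if n + m = 0 then -(((n : ℂ) ^ 2 + n) * ((N : ℂ) / 2)) else 0)
          • (1 : Module.End ℂ M)) :
    -- the operators `L̄(n) = L(n) + (n/N) I(n) + δ_{n,0}(1/2 − (1−μc)/(2N))·Id`
    let Lbar : ℤ → Module.End ℂ M := fun n =>
      Lop n + ((n : ℂ) / N) • Iop n
        + (if n = 0 then 1 / 2 - (1 - μ * c) / (2 * N) else 0) • (1 : Module.End ℂ M)
    -- satisfy the Virasoro relations with central charge `c_Vir + 12 − (12/N)(1−μc)`: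
    ∀ n m : ℤ, ⁅Lbar n, Lbar m⁆
      = ((n : ℂ) - m) • Lbar (n + m)
        + (if n + m = 0 then
            ((n : ℂ) ^ 3 - n) / 12 * (cVir + 12 - 12 / (N : ℂ) * (1 - μ * c)) else 0)
          • (1 : Module.End ℂ M) := by
  intro Lbar n m
  have hN0 : (N : ℂ) ≠ 0 := Nat.cast_ne_zero.mpr (by omega)
  have h1 : ∀ x : Module.End ℂ M, ⁅x, (1 : Module.End ℂ M)⁆ = 0 := fun x => by
    simp [Ring.lie_def]
  have h2 : ∀ x : Module.End ℂ M, ⁅(1 : Module.End ℂ M), x⁆ = 0 := fun x => by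
    simp [Ring.lie_def]
  have hIL : ⁅Iop n, Lop m⁆ = -⁅Lop m, Iop n⁆ := by rw [Ring.lie_def, Ring.lie_def, neg_sub]
  have lie_add : ∀ x y z : Module.End ℂ M, ⁅x, y + z⁆ = ⁅x, y⁆ + ⁅x, z⁆ :=
    fun x y z => by simp only [Ring.lie_def, mul_add, add_mul]; abel
  have add_lie : ∀ x y z : Module.End ℂ M, ⁅x + y, z⁆ = ⁅x, z⁆ + ⁅y, z⁆ :=
    fun x y z => by simp only [Ring.lie_def, mul_add, add_mul]; abel
  have lie_smul : ∀ (t : ℂ) (x y : Module.End ℂ M), ⁅x, t • y⁆ = t • ⁅x, y⁆ :=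
    fun t x y => by simp only [Ring.lie_def, mul_smul_comm, smul_mul_assoc, smul_sub]
  have smul_lie : ∀ (t : ℂ) (x y : Module.End ℂ M), ⁅t • x, y⁆ = t • ⁅x, y⁆ :=
    fun t x y => by simp only [Ring.lie_def, mul_smul_comm, smul_mul_assoc, smul_sub]
  simp only [Lbar, lie_add, add_lie, lie_smul, smul_lie, h1, h2, smul_zero, add_zero, zero_add]
  rw [hIL, hLL, hLI, hLI, hII]
  rcases eq_or_ne (n + m) 0 with h | h
  · have hm : m = -n := by omega
    subst hm
    simp only [h, if_pos, add_neg_cancel, neg_add_cancel, if_true]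
    push_cast
    match_scalars <;> field_simp <;> ring
  · have h' : m + n ≠ 0 := by omega
    simp only [h, h', if_neg, if_false, add_comm m n]
    push_cast
    match_scalars <;> field_simp <;> ring
end
end

section
/- (Key step in the proof of Lemma 5.3(i)) Let M be a complex vector space, D a linear operator on M, and S a finite set of integers. For each s ∈ S let (f^s_n)_{n∈ℤ} be a family of linear operators on M satisfying the translation-covariance relation [D, f^s_n] = −n f^s_{n−1} for all n ∈ ℤ (equivalently, writing f^s(z) = Σ_{n∈ℤ} f^s_n z^{−n−1}, the relation [D, f^s(z)] = ∂f^s(z)/∂z). If Σ_{s∈S} f^s(z) z^{−s} = 0, i.e. for every k ∈ ℤ one has Σ_{s∈S} f^s_{k−s} = 0, then f^s_n = 0 for all s ∈ S and all n ∈ ℤ. -/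
noncomputable section

/-- key step in the proof of Lemma 5.3(i). Let `M` be a complex vector
space, `D` a linear operator on `M`, and `S` a finite set of integers. For each `s ∈ S` let
`(fˢ_n)_{n∈ℤ}` be a family of operators on `M` satisfying the translation-covariance
relation `[D, fˢ_n] = −n fˢ_{n−1}` (i.e. `[D, fˢ(z)] = ∂fˢ(z)/∂z` for
`fˢ(z) = Σ_n fˢ_n z^{−n−1}`). If `Σ_{s∈S} fˢ(z) z^{−s} = 0`, i.e. for every `k ∈ ℤ` one has
`Σ_{s∈S} fˢ_{k−s} = 0`, then `fˢ_n = 0` for all `s ∈ S` and all `n ∈ ℤ`. -/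
theorem statement16 (M : Type*) [AddCommGroup M] [Module ℂ M]
    (D : Module.End ℂ M) (S : Finset ℤ) (f : ℤ → ℤ → Module.End ℂ M)
    (hcov : ∀ s ∈ S, ∀ n : ℤ, ⁅D, f s n⁆ = (-(n : ℂ)) • f s (n - 1))
    (hsum : ∀ k : ℤ, ∑ s ∈ S, f s (k - s) = 0) :
    ∀ s ∈ S, ∀ n : ℤ, f s n = 0 := by
  -- Step 1: `∑ s, s^m • f s (k-s) = 0` for every power `m`.
  have key : ∀ m : ℕ, ∀ k : ℤ, ∑ s ∈ S, ((s : ℂ) ^ m) • f s (k - s) = 0 := by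
    intro m
    induction m with
    | zero => intro k; simpa using hsum k
    | succ m ih =>
      intro k
      have h1 : ∑ s ∈ S, ((s : ℂ) ^ m * ((s : ℂ) - ((k : ℂ) + 1))) • f s (k - s) = 0 := by
        have hb : ∀ s ∈ S, ((s : ℂ) ^ m) • ⁅D, f s (k + 1 - s)⁆
            = ((s : ℂ) ^ m * ((s : ℂ) - ((k : ℂ) + 1))) • f s (k - s) := by
          intro s hs
          rw [hcov s hs]
          have h : (k + 1 - s - 1 : ℤ) = k - s := by ring
          rw [h, smul_smul]
          congr 1
          push_cast
          ring
        calc ∑ s ∈ S, ((s : ℂ) ^ m * ((s : ℂ) - ((k : ℂ) + 1))) • f s (k - s)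
            = ∑ s ∈ S, ((s : ℂ) ^ m) • ⁅D, f s (k + 1 - s)⁆ :=
              (Finset.sum_congr rfl hb).symm
          _ = ⁅D, ∑ s ∈ S, ((s : ℂ) ^ m) • f s (k + 1 - s)⁆ := by
              simp only [Ring.lie_def, Finset.mul_sum, Finset.sum_mul,
                mul_smul_comm, smul_mul_assoc, ← Finset.sum_sub_distrib, smul_sub]
          _ = 0 := by rw [ih (k + 1), Ring.lie_def, mul_zero, zero_mul, sub_zero]
      have h2 := ih k
      calc ∑ s ∈ S, ((s : ℂ) ^ (m + 1)) • f s (k - s)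
          = ∑ s ∈ S, (((s : ℂ) ^ m * ((s : ℂ) - ((k : ℂ) + 1))) • f s (k - s)
              + (((k : ℂ) + 1) * (s : ℂ) ^ m) • f s (k - s)) := by
            refine Finset.sum_congr rfl fun s _ => ?_
            rw [← add_smul]
            congr 1
            ring
        _ = ∑ s ∈ S, ((s : ℂ) ^ m * ((s : ℂ) - ((k : ℂ) + 1))) • f s (k - s)
              + ((k : ℂ) + 1) • ∑ s ∈ S, ((s : ℂ) ^ m) • f s (k - s) := by
            rw [Finset.sum_add_distrib, Finset.smul_sum]
            congr 1
            exact Finset.sum_congr rfl fun s _ => by rw [smul_smul]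
        _ = 0 := by rw [h1, h2, smul_zero, add_zero]
  -- Step 2: the same with any polynomial evaluated at `s`.
  have keyp : ∀ p : Polynomial ℂ, ∀ k : ℤ, ∑ s ∈ S, (p.eval (s : ℂ)) • f s (k - s) = 0 := by
    intro p k
    calc ∑ s ∈ S, (p.eval (s : ℂ)) • f s (k - s)
        = ∑ s ∈ S, ∑ i ∈ Finset.range (p.natDegree + 1),
            (p.coeff i * (s : ℂ) ^ i) • f s (k - s) := by
          refine Finset.sum_congr rfl fun s _ => ?_
          rw [Polynomial.eval_eq_sum_range, Finset.sum_smul]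
      _ = ∑ i ∈ Finset.range (p.natDegree + 1), ∑ s ∈ S,
            (p.coeff i * (s : ℂ) ^ i) • f s (k - s) := Finset.sum_comm
      _ = 0 := by
          refine Finset.sum_eq_zero fun i _ => ?_
          have : ∑ s ∈ S, (p.coeff i * (s : ℂ) ^ i) • f s (k - s)
              = p.coeff i • ∑ s ∈ S, ((s : ℂ) ^ i) • f s (k - s) := by
            rw [Finset.smul_sum]
            exact Finset.sum_congr rfl fun s _ => by rw [smul_smul]
          rw [this, key i k, smul_zero]
  -- Step 3: use a Lagrange basis polynomial to isolate one term.
  intro s₀ hs₀ n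
  have hinj : Set.InjOn (fun t : ℤ => (t : ℂ)) ↑S := fun a _ b _ h => Int.cast_injective h
  have hp := keyp (Lagrange.basis S (fun t : ℤ => (t : ℂ)) s₀) (n + s₀)
  rw [Finset.sum_eq_single s₀] at hp
  · rw [Lagrange.eval_basis_self hinj hs₀] at hp
    simpa using hp
  · intro t ht hts
    rw [Lagrange.eval_basis_of_ne (Ne.symm hts) ht, zero_smul]
  · intro h; exact absurd hs₀ h
end
end
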